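/- For all positive integers a, b, and p with p ≥ 2, there exists a positive integer n with n ≥ p such that every set A of permutations of {1,…,n} with |A| ≤ a satisfies d_p(A) ≥ b − 1. -/

import Mathlib

/-!
By a Ramsey-type form of the Erdős–Szekeres theorem, applied once per permutation,
for `n` large enough every family of at most `a` permutations of `[n]` is simultaneously monotone
on some set `S` with `|S| ≥ b - 1 + p`. Each of them then attains its maximum over `S` at `min S`
or at `max S`, so every `P` with `{min S, max S} ⊆ P ⊆ S` and `|P| = p` has `S ⊆ ⟨A;P⟩`.
-/

/-- `σ(≤P) = {s : σ s ≤ max_{j ∈ P} σ j}`. -/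
def permLe {n : ℕ} (σ : Equiv.Perm (Fin n)) (P : Finset (Fin n)) : Finset (Fin n) :=
  Finset.univ.filter fun s => ∃ j ∈ P, σ s ≤ σ j

/-- The `P`-dependent set `⟨A;P⟩ = ⋂_{σ ∈ A} σ(≤P)`. -/
def depSet {n : ℕ} (A : Finset (Equiv.Perm (Fin n))) (P : Finset (Fin n)) : Finset (Fin n) :=
  Finset.univ.filter fun s => ∀ σ ∈ A, ∃ j ∈ P, σ s ≤ σ j

/-- The `P`-dependency `d(A;P) = |⟨A;P⟩| - |P|`. -/
def dep {n : ℕ} (A : Finset (Equiv.Perm (Fin n))) (P : Finset (Fin n)) : ℕ :=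
  (depSet A P).card - P.card

/-- The `p`-tuple dependency `d_p(A) = max {d(A;P) : |P| = p}`. -/
def tupleDep {n : ℕ} (A : Finset (Equiv.Perm (Fin n))) (p : ℕ) : ℕ :=
  (Finset.powersetCard p (Finset.univ : Finset (Fin n))).sup (dep A)

open Finset

section ErdosSzekeres

variable {β α : Type*} [LinearOrder β] [LinearOrder α]

theorem Finset.card_sub_one_le_card_filter_add_card_filter {f : β → α} {S : Finset β}
    (hf : Set.InjOn f S) {x : β} (hx : x ∈ S) :
    #S - 1 ≤ #((S.erase x).filter (f x < f ·)) + #((S.erase x).filter (f · < f x)) := by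
  rw [← card_erase_of_mem hx]
  refine (card_le_card fun y hy => ?_).trans (card_union_le _ _)
  have hfy : f y ≠ f x := fun h => (mem_erase.mp hy).1 (hf (mem_erase.mp hy).2 hx h)
  rcases hfy.lt_or_gt with h | h <;> simp [hy, h]

/-- Split off `x = min S`: the rest of `S` lies above or below `f x`, and an increasing
(resp. decreasing) run found above (resp. below) extends by `x`. -/
theorem Finset.exists_strictMonoOn_or_strictAntiOn_of_two_pow_le {f : β → α} (r s : ℕ)
    {S : Finset β} (hf : Set.InjOn f S) (hS : 2 ^ (r + s) ≤ #S) :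
    ∃ T ⊆ S, (r ≤ #T ∧ StrictMonoOn f T) ∨ (s ≤ #T ∧ StrictAntiOn f T) := by
  induction r generalizing s S with
  | zero => exact ⟨∅, empty_subset _, .inl ⟨le_rfl, by simp [StrictMonoOn]⟩⟩
  | succ r ihr =>
    induction s generalizing S with
    | zero => exact ⟨∅, empty_subset _, .inr ⟨le_rfl, by simp [StrictAntiOn]⟩⟩
    | succ s ihs =>
      have hne : S.Nonempty := card_pos.mp (lt_of_lt_of_le (Nat.two_pow_pos _) hS)
      set x := S.min' hne
      set U := (S.erase x).filter (f x < f ·)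
      set L := (S.erase x).filter (f · < f x)
      have hUS : U ⊆ S := (filter_subset _ _).trans (erase_subset _ _)
      have hLS : L ⊆ S := (filter_subset _ _).trans (erase_subset _ _)
      have hsplit : #S - 1 ≤ #U + #L :=
        card_sub_one_le_card_filter_add_card_filter hf (S.min'_mem hne)
      have hpow : 2 ^ (r + 1 + (s + 1)) = 2 ^ (r + (s + 1)) + 2 ^ (r + 1 + s) := by ring
      by_cases hU : 2 ^ (r + (s + 1)) ≤ #U
      · obtain ⟨T, hTU, hT⟩ := ihr (s + 1) (hf.mono hUS) hU
        rcases hT with ⟨hTr, hTmono⟩ | hTanti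
        · have hxT : x ∉ T := fun h => by simpa [U] using hTU h
          refine ⟨insert x T, insert_subset (S.min'_mem hne) (hTU.trans hUS), .inl ⟨?_, ?_⟩⟩
          · rw [card_insert_of_notMem hxT]; omega
          · rw [coe_insert,
              strictMonoOn_insert_iff_of_forall_ge fun y hy => S.min'_le y (hUS (hTU hy))]
            exact ⟨fun y hy _ => (mem_filter.mp (hTU hy)).2, hTmono⟩
        · exact ⟨T, hTU.trans hUS, .inr hTanti⟩
      · obtain ⟨T, hTL, hT⟩ := ihs (hf.mono hLS) (by omega)
        rcases hT with hTmono | ⟨hTs, hTanti⟩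
        · exact ⟨T, hTL.trans hLS, .inl hTmono⟩
        · have hxT : x ∉ T := fun h => by simpa [L] using hTL h
          refine ⟨insert x T, insert_subset (S.min'_mem hne) (hTL.trans hLS), .inr ⟨?_, ?_⟩⟩
          · rw [card_insert_of_notMem hxT]; omega
          · rw [coe_insert,
              strictAntiOn_insert_iff_of_forall_ge fun y hy => S.min'_le y (hLS (hTL hy))]
            exact ⟨fun y hy _ => (mem_filter.mp (hTL hy)).2, hTanti⟩

theorem Finset.exists_subset_strictMonoOn_or_strictAntiOn {f : β → α} {S : Finset β}
    (hf : Set.InjOn f S) {m : ℕ} (hS : 4 ^ m ≤ #S) :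
    ∃ T ⊆ S, m ≤ #T ∧ (StrictMonoOn f T ∨ StrictAntiOn f T) := by
  have h4 : (4 : ℕ) ^ m = 2 ^ (m + m) := by rw [← two_mul, pow_mul]; norm_num
  obtain ⟨T, hTS, ⟨hT, hmono⟩ | ⟨hT, hanti⟩⟩ :=
    exists_strictMonoOn_or_strictAntiOn_of_two_pow_le m m hf (h4 ▸ hS)
  exacts [⟨T, hTS, hT, .inl hmono⟩, ⟨T, hTS, hT, .inr hanti⟩]

theorem Finset.exists_subset_forall_strictMonoOn_or_strictAntiOn {ι : Type*} (f : ι → β → α)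
    (A : Finset ι) (m : ℕ) {S : Finset β} (hf : ∀ i ∈ A, Set.InjOn (f i) S)
    (hS : (4 ^ ·)^[#A] m ≤ #S) :
    ∃ T ⊆ S, m ≤ #T ∧ ∀ i ∈ A, StrictMonoOn (f i) T ∨ StrictAntiOn (f i) T := by
  classical
  induction A using Finset.induction_on generalizing m S with
  | empty => exact ⟨S, subset_rfl, by simpa using hS, by simp⟩
  | insert i A hi ih =>
    rw [card_insert_of_notMem hi, Function.iterate_succ_apply] at hS
    obtain ⟨T, hTS, hT, hA⟩ := ih (4 ^ m) (fun j hj => hf j (mem_insert_of_mem hj)) hS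
    obtain ⟨T', hT'T, hT', hi⟩ :=
      exists_subset_strictMonoOn_or_strictAntiOn ((hf i (mem_insert_self i A)).mono hTS) hT
    refine ⟨T', hT'T.trans hTS, hT', fun j hj => ?_⟩
    rcases mem_insert.mp hj with rfl | hj
    · exact hi
    · exact (hA j hj).imp (·.mono (coe_subset.mpr hT'T)) (·.mono (coe_subset.mpr hT'T))

end ErdosSzekeres

section Dependency

variable {n : ℕ} {A : Finset (Equiv.Perm (Fin n))} {S P : Finset (Fin n)}

theorem subset_depSet_of_forall_strictMonoOn_or_strictAntiOn (hS : S.Nonempty)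
    (hmin : S.min' hS ∈ P) (hmax : S.max' hS ∈ P)
    (hA : ∀ σ ∈ A, StrictMonoOn σ S ∨ StrictAntiOn σ S) : S ⊆ depSet A P := by
  intro s hs
  refine mem_filter.mpr ⟨mem_univ s, fun σ hσ => ?_⟩
  rcases hA σ hσ with hmono | hanti
  · exact ⟨_, hmax, hmono.monotoneOn hs (S.max'_mem hS) (S.le_max' s hs)⟩
  · exact ⟨_, hmin, hanti.antitoneOn (S.min'_mem hS) hs (S.min'_le s hs)⟩

theorem card_sub_card_le_dep (h : S ⊆ depSet A P) : #S - #P ≤ dep A P :=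
  Nat.sub_le_sub_right (card_le_card h) _

theorem dep_le_tupleDep {p : ℕ} (hP : #P = p) : dep A P ≤ tupleDep A p :=
  le_sup (mem_powersetCard.mpr ⟨subset_univ P, hP⟩)

end Dependency

theorem p_tuple_dependency_large_general (a b p : ℕ) (hp : 2 ≤ p) :
    ∃ n : ℕ, p ≤ n ∧
      ∀ A : Finset (Equiv.Perm (Fin n)), A.card ≤ a → b - 1 ≤ tupleDep A p := by
  have hgrow : id ≤ (4 ^ · : ℕ → ℕ) := fun k => (Nat.lt_pow_self (by norm_num)).le
  refine ⟨(4 ^ ·)^[a] (b - 1 + p), ?_, fun A hA => ?_⟩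
  · exact (Nat.le_add_left p (b - 1)).trans (Function.id_le_iterate_of_id_le hgrow a _)
  obtain ⟨S, -, hSm, hS⟩ := exists_subset_forall_strictMonoOn_or_strictAntiOn (⇑) A (b - 1 + p)
    (S := univ) (fun σ _ => σ.injective.injOn)
    (by simpa using Function.monotone_iterate_of_id_le hgrow hA _)
  have hne : S.Nonempty := card_pos.mp (by omega)
  have hends : ({S.min' hne, S.max' hne} : Finset _) ⊆ S :=
    insert_subset (S.min'_mem hne) (singleton_subset_iff.mpr (S.max'_mem hne))
  obtain ⟨P, hP, -, hPcard⟩ :=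
    exists_subsuperset_card_eq hends (card_le_two.trans hp) (by omega)
  have hSP : S ⊆ depSet A P := subset_depSet_of_forall_strictMonoOn_or_strictAntiOn hne
    (hP (mem_insert_self _ _)) (hP (mem_insert_of_mem (mem_singleton_self _))) hS
  calc b - 1 ≤ #S - #P := by omega
    _ ≤ dep A P := card_sub_card_le_dep hSP
    _ ≤ tupleDep A p := dep_le_tupleDep hPcard

theorem p_tuple_dependency_large (a b p : ℕ) (ha : 0 < a) (hb : 0 < b) (hp : 2 ≤ p) :
    ∃ n : ℕ, p ≤ n ∧
      ∀ A : Finset (Equiv.Perm (Fin n)), A.card ≤ a → b - 1 ≤ tupleDep A p :=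
  p_tuple_dependency_large_general a b p hp
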